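/- Let G be an abelian group and let X, Y be random variables taking values in finite subsets of G. Then d_ent(X, Y) ≤ d*_ent(X, Y) ≤ 3 d_ent(X, Y). -/

import Mathlib

open Finset

noncomputable section

/-- `IsPMF p`: the finitely supported function `p` is a probability mass function,
modelling the distribution of a random variable taking values in a finite subset. -/
def IsPMF {G : Type*} (p : G →₀ ℝ) : Prop :=
  (∀ x, 0 ≤ p x) ∧ ∑ x ∈ p.support, p x = 1

/-- Shannon entropy `H(X)` of a random variable with distribution `p`. -/
def ent {G : Type*} (p : G →₀ ℝ) : ℝ :=
  ∑ x ∈ p.support, Real.negMulLog (p x)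

/-- The joint distribution of a pair of independent random variables with
distributions `p` and `q`. -/
def prodPMF {G H : Type*} (p : G →₀ ℝ) (q : H →₀ ℝ) : (G × H) →₀ ℝ :=
  Finsupp.onFinset (p.support ×ˢ q.support) (fun z => p z.1 * q z.2)
    (fun _z hz => Finset.mem_product.2
      ⟨Finsupp.mem_support_iff.2 (left_ne_zero_of_mul hz),
       Finsupp.mem_support_iff.2 (right_ne_zero_of_mul hz)⟩)

/-- The distribution of `X - Y`, where `X, Y` are independent with distributions `p, q`. -/
def subDist {G : Type*} [AddCommGroup G] (p q : G →₀ ℝ) : G →₀ ℝ :=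
  Finsupp.mapDomain (fun z : G × G => z.1 - z.2) (prodPMF p q)

/-- The distribution of `X + Y`, where `X, Y` are independent with distributions `p, q`. -/
def sumDist {G : Type*} [AddCommGroup G] (p q : G →₀ ℝ) : G →₀ ℝ :=
  Finsupp.mapDomain (fun z : G × G => z.1 + z.2) (prodPMF p q)

/-- The entropic Ruzsa distance `d_ent(X, Y) = H(X' - Y') - H(X)/2 - H(Y)/2`,
where `X', Y'` are independent copies of `X ~ p`, `Y ~ q`. -/
def dEnt {G : Type*} [AddCommGroup G] (p q : G →₀ ℝ) : ℝ :=
  ent (subDist p q) - ent p / 2 - ent q / 2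

/-- The entropic doubling constant `σ_ent[X] = exp(H(X₁ + X₂) - H(X))`
for independent copies `X₁, X₂` of `X ~ p`. -/
def sigmaEnt {G : Type*} [AddCommGroup G] (p : G →₀ ℝ) : ℝ :=
  Real.exp (ent (sumDist p p) - ent p)

/-- First marginal of a joint distribution on `G × H`. -/
def fstMarg {G H : Type*} (w : (G × H) →₀ ℝ) : G →₀ ℝ :=
  Finsupp.mapDomain Prod.fst w

/-- Second marginal of a joint distribution on `G × H`. -/
def sndMarg {G H : Type*} (w : (G × H) →₀ ℝ) : H →₀ ℝ :=
  Finsupp.mapDomain Prod.snd w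

/-- The maximal entropic Ruzsa distance `d*_ent(X, Y)`: the supremum of
`H(X' - Y') - H(X)/2 - H(Y)/2` over all couplings `(X', Y')` of `X ~ p` and `Y ~ q`. -/
def dEntStar {G : Type*} [AddCommGroup G] (p q : G →₀ ℝ) : ℝ :=
  sSup { d : ℝ | ∃ w : (G × G) →₀ ℝ, IsPMF w ∧ fstMarg w = p ∧ sndMarg w = q ∧
    d = ent (Finsupp.mapDomain (fun z : G × G => z.1 - z.2) w) - ent p / 2 - ent q / 2 }

/-- The uniform distribution on a finite set `A`. -/
def unif {G : Type*} [DecidableEq G] (A : Finset G) : G →₀ ℝ :=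
  Finsupp.onFinset A (fun x => if x ∈ A then ((A.card : ℝ))⁻¹ else 0)
    (fun x hx => by by_contra h; exact hx (if_neg h))

/-- The distribution of `X` conditioned on the event `π(X) = y`, where `X ~ p`. -/
def condFiber {G H : Type*} [DecidableEq H] (π : G → H) (y : H) (p : G →₀ ℝ) : G →₀ ℝ :=
  Finsupp.onFinset p.support
    (fun x => if π x = y then p x / (Finsupp.mapDomain π p) y else 0)
    (fun x hx => Finsupp.mem_support_iff.2 (fun h0 => hx (by (try simp only []); split_ifs <;> simp [h0])))

/-- The entropy `h(p)` of the Bernoulli distribution with parameter `p`. -/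
def binEnt (p : ℝ) : ℝ := Real.negMulLog p + Real.negMulLog (1 - p)

/-- Skew-dimension bound: `skewDimLE A r` means the skew-dimension of `A ⊆ ℤ^D`
is at most `r`. -/
def skewDimLE {D : ℕ} : Finset (Fin D → ℤ) → ℕ → Prop
  | A, 0 => A.card ≤ 1
  | A, r + 1 => A.card ≤ 1 ∨ ∃ i : Fin D, ∀ n : ℤ,
      skewDimLE (A.filter fun v => v i = n) r

/-- The (affine) dimension of a finite subset `A ⊆ ℤ^D`: the dimension of the
real span of `A - A`. -/
def dimAff {D : ℕ} (A : Finset (Fin D → ℤ)) : ℕ :=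
  Module.finrank ℝ (Submodule.span ℝ
    { x : Fin D → ℝ | ∃ a ∈ A, ∃ b ∈ A, x = fun i => ((a i : ℝ) - (b i : ℝ)) })

/-!
The product coupling is admissible, which gives the lower bound. For the upper bound take any
coupling `(X, Y)` and an independent `Z`. Since `X - Y = (X - Z) - (Y - Z)`, submodularity of
entropy gives the Ruzsa triangle inequality `H(X - Y) + H(Z) ≤ H(X - Z) + H(Y - Z)`. Taking
`Z ~ Y` bounds `H(X - Y)` by `H(X' - Y') + H(Y' - Y'') - H(Y)` for independent copies, and the
same inequality for `Y' - Y''` with `Z ~ X` bounds `H(Y' - Y'')` by `2 H(X' - Y') - H(X)`.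
-/

section Distributions

variable {α β : Type*}

lemma mapDomain_apply_eq_sum_fiber {M : Type*} [AddCommMonoid M] [DecidableEq β] (f : α → β)
    (w : α →₀ M) (y : β) :
    Finsupp.mapDomain f w y = ∑ x ∈ w.support with f x = y, w x := by
  rw [Finsupp.mapDomain, Finsupp.sum_apply, Finsupp.sum, Finset.sum_filter]
  exact Finset.sum_congr rfl fun x _ => Finsupp.single_apply

lemma mapDomain_nonneg (f : α → β) {w : α →₀ ℝ} (hw : ∀ x, 0 ≤ w x) (y : β) :
    0 ≤ Finsupp.mapDomain f w y := by
  classical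
  rw [mapDomain_apply_eq_sum_fiber]
  exact Finset.sum_nonneg fun x _ => hw x

lemma apply_le_mapDomain_apply (f : α → β) {w : α →₀ ℝ} (hw : ∀ x, 0 ≤ w x) (x : α) :
    w x ≤ Finsupp.mapDomain f w (f x) := by
  classical
  rw [mapDomain_apply_eq_sum_fiber]
  by_cases hx : x ∈ w.support
  · exact Finset.single_le_sum (fun i _ => hw i) (Finset.mem_filter.2 ⟨hx, rfl⟩)
  · rw [Finsupp.notMem_support_iff.1 hx]
    exact Finset.sum_nonneg fun i _ => hw i

lemma mapDomain_apply_pos (f : α → β) {w : α →₀ ℝ} (hw : ∀ x, 0 ≤ w x) {x : α}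
    (hx : x ∈ w.support) : 0 < Finsupp.mapDomain f w (f x) :=
  ((hw x).lt_of_ne (Finsupp.mem_support_iff.1 hx).symm).trans_le (apply_le_mapDomain_apply f hw x)

lemma sum_mapDomain_mul (f : α → β) (w : α →₀ ℝ) (g : β → ℝ) :
    ∑ y ∈ (Finsupp.mapDomain f w).support, Finsupp.mapDomain f w y * g y
      = ∑ x ∈ w.support, w x * g (f x) :=
  Finsupp.sum_mapDomain_index (h := fun y m => m * g y) (fun _ => zero_mul _)
    (fun _ _ _ => add_mul _ _ _)

lemma IsPMF.mapDomain {w : α →₀ ℝ} (hw : IsPMF w) (f : α → β) :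
    IsPMF (Finsupp.mapDomain f w) :=
  ⟨mapDomain_nonneg f hw.1, by simpa [hw.2] using sum_mapDomain_mul f w 1⟩

lemma ent_eq_neg_sum_mul_log (p : α →₀ ℝ) :
    ent p = -∑ x ∈ p.support, p x * Real.log (p x) := by
  simp only [ent, Real.negMulLog, neg_mul, Finset.sum_neg_distrib]

lemma ent_nonneg {p : α →₀ ℝ} (hp : IsPMF p) : 0 ≤ ent p :=
  Finset.sum_nonneg fun x hx => Real.negMulLog_nonneg (hp.1 x)
    (hp.2 ▸ Finset.single_le_sum (fun y _ => hp.1 y) hx)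

lemma ent_mapDomain_of_injective {f : α → β} (hf : Function.Injective f) (w : α →₀ ℝ) :
    ent (Finsupp.mapDomain f w) = ent w := by
  classical
  rw [ent, Finsupp.mapDomain_support_of_injective hf, Finset.sum_image fun _ _ _ _ h => hf h]
  simp only [Finsupp.mapDomain_apply hf, ent]

lemma sum_mul_log_mapDomain (f : α → β) (w : α →₀ ℝ) :
    ∑ x ∈ w.support, w x * Real.log (Finsupp.mapDomain f w (f x))
      = -ent (Finsupp.mapDomain f w) := by
  rw [ent_eq_neg_sum_mul_log, neg_neg, sum_mapDomain_mul]

lemma ent_le_neg_sum_mul_log {p : α →₀ ℝ} (hp : IsPMF p) {r : α → ℝ}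
    (hr : ∀ x ∈ p.support, 0 < r x) (hr1 : ∑ x ∈ p.support, r x ≤ 1) :
    ent p ≤ -∑ x ∈ p.support, p x * Real.log (r x) := by
  have hterm : ∀ x ∈ p.support, p x * Real.log (r x) - p x * Real.log (p x) ≤ r x - p x := by
    intro x hx
    have hpx : 0 < p x := (hp.1 x).lt_of_ne (Finsupp.mem_support_iff.1 hx).symm
    have hlog := Real.log_le_sub_one_of_pos (div_pos (hr x hx) hpx)
    rw [Real.log_div (hr x hx).ne' hpx.ne'] at hlog
    calc p x * Real.log (r x) - p x * Real.log (p x)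
        = p x * (Real.log (r x) - Real.log (p x)) := by ring
      _ ≤ p x * (r x / p x - 1) := mul_le_mul_of_nonneg_left hlog hpx.le
      _ = r x - p x := by field_simp
  have hsum := Finset.sum_le_sum hterm
  rw [Finset.sum_sub_distrib, Finset.sum_sub_distrib, hp.2] at hsum
  rw [ent_eq_neg_sum_mul_log]
  linarith

end Distributions

section Product

variable {α β γ δ : Type*}

@[simp] lemma prodPMF_apply (p : α →₀ ℝ) (q : β →₀ ℝ) (z : α × β) :
    prodPMF p q z = p z.1 * q z.2 := rfl

lemma support_prodPMF (p : α →₀ ℝ) (q : β →₀ ℝ) :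
    (prodPMF p q).support = p.support ×ˢ q.support := by
  ext z
  simp [Finsupp.mem_support_iff]

lemma IsPMF.prodPMF {p : α →₀ ℝ} {q : β →₀ ℝ} (hp : IsPMF p) (hq : IsPMF q) :
    IsPMF (prodPMF p q) := by
  refine ⟨fun z => mul_nonneg (hp.1 z.1) (hq.1 z.2), ?_⟩
  rw [support_prodPMF, Finset.sum_product]
  simp only [prodPMF_apply]
  rw [← Finset.sum_mul_sum, hp.2, hq.2, one_mul]

lemma ent_prodPMF {p : α →₀ ℝ} {q : β →₀ ℝ} (hp : IsPMF p) (hq : IsPMF q) :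
    ent (prodPMF p q) = ent p + ent q := by
  rw [ent, support_prodPMF, Finset.sum_product]
  simp only [prodPMF_apply, Real.negMulLog_mul, Finset.sum_add_distrib, ← Finset.sum_mul,
    ← Finset.mul_sum, hq.2, hp.2, one_mul, ent]

lemma mapDomain_prodMap_prodPMF (f : α → γ) (g : β → δ) (p : α →₀ ℝ) (q : β →₀ ℝ) :
    Finsupp.mapDomain (Prod.map f g) (prodPMF p q)
      = prodPMF (Finsupp.mapDomain f p) (Finsupp.mapDomain g q) := by
  classical
  ext ⟨a, b⟩
  rw [mapDomain_apply_eq_sum_fiber, support_prodPMF, prodPMF_apply, mapDomain_apply_eq_sum_fiber,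
    mapDomain_apply_eq_sum_fiber, Finset.sum_mul_sum, ← Finset.sum_product']
  congr 1
  ext z
  simp only [Finset.mem_filter, Finset.mem_product, Prod.map, Prod.ext_iff]
  tauto

lemma mapDomain_swap_prodPMF (p : α →₀ ℝ) (q : β →₀ ℝ) :
    Finsupp.mapDomain Prod.swap (prodPMF p q) = prodPMF q p := by
  ext z
  rw [show (Prod.swap : α × β → β × α) = Equiv.prodComm α β from rfl,
    Finsupp.mapDomain_equiv_apply]
  simp [mul_comm]

lemma fstMarg_prodPMF (p : α →₀ ℝ) {q : β →₀ ℝ} (hq : IsPMF q) :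
    fstMarg (prodPMF p q) = p := by
  classical
  ext a
  rw [fstMarg, mapDomain_apply_eq_sum_fiber, support_prodPMF, Finset.filter_product_left (· = a),
    Finset.sum_product]
  simp_rw [prodPMF_apply, ← Finset.mul_sum, hq.2, mul_one]
  rw [Finset.sum_filter, Finset.sum_ite_eq', ite_eq_left_iff]
  exact fun ha => (Finsupp.notMem_support_iff.1 ha).symm

lemma sndMarg_prodPMF {p : α →₀ ℝ} (hp : IsPMF p) (q : β →₀ ℝ) :
    sndMarg (prodPMF p q) = q := by
  rw [sndMarg, show (Prod.snd : α × β → β) = Prod.fst ∘ Prod.swap from rfl,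
    Finsupp.mapDomain_comp, mapDomain_swap_prodPMF]
  exact fstMarg_prodPMF q hp

end Product

section Submodularity

variable {α β γ : Type*}

/-- Gibbs' inequality against `r(a, b) = P(X = a) P(Y = b) / P(φ X = φ a)`, which has mass at most
one on the support of `(X, Y)` because `ψ Y` has the same law as `φ X`. -/
theorem ent_add_ent_le_of_comp_eq {u : (α × β) →₀ ℝ} (hu : IsPMF u) (φ : α → γ) (ψ : β → γ)
    (h : ∀ z ∈ u.support, φ z.1 = ψ z.2) :
    ent u + ent (Finsupp.mapDomain φ (fstMarg u)) ≤ ent (fstMarg u) + ent (sndMarg u) := by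
  classical
  set pa := fstMarg u
  set pb := sndMarg u
  set t := Finsupp.mapDomain φ pa
  have ht_comp : t = Finsupp.mapDomain (φ ∘ Prod.fst) u := Finsupp.mapDomain_comp.symm
  have ht_snd : Finsupp.mapDomain ψ pb = t := ht_comp ▸
    Finsupp.mapDomain_comp.symm.trans (Finsupp.mapDomain_congr fun z hz => (h z hz).symm)
  have hpa : ∀ z ∈ u.support, 0 < pa z.1 := fun z hz => mapDomain_apply_pos Prod.fst hu.1 hz
  have hpb : ∀ z ∈ u.support, 0 < pb z.2 := fun z hz => mapDomain_apply_pos Prod.snd hu.1 hz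
  have ht : ∀ z ∈ u.support, 0 < t (φ z.1) := fun z hz => by
    rw [ht_comp]; exact mapDomain_apply_pos (φ ∘ Prod.fst) hu.1 hz
  set r : α × β → ℝ := fun z => pa z.1 * pb z.2 / t (φ z.1)
  have hr : ∀ z ∈ u.support, 0 < r z := fun z hz =>
    div_pos (mul_pos (hpa z hz) (hpb z hz)) (ht z hz)
  have hr_mass : ∑ z ∈ u.support, r z ≤ 1 := by
    have hpa0 := (hu.mapDomain Prod.fst).1
    have hpb0 := (hu.mapDomain Prod.snd).1
    calc ∑ z ∈ u.support, r z
        ≤ ∑ z ∈ pa.support ×ˢ pb.support with φ z.1 = ψ z.2, r z := by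
          refine Finset.sum_le_sum_of_subset_of_nonneg (fun z hz => ?_) fun z _ _ =>
            div_nonneg (mul_nonneg (hpa0 _) (hpb0 _)) (mapDomain_nonneg φ hpa0 _)
          simp only [Finset.mem_filter, Finset.mem_product, Finsupp.mem_support_iff]
          exact ⟨⟨(hpa z hz).ne', (hpb z hz).ne'⟩, h z hz⟩
      _ = ∑ a ∈ pa.support, pa a / t (φ a) * ∑ b ∈ pb.support with ψ b = φ a, pb b := by
          rw [Finset.sum_filter, Finset.sum_product]
          refine Finset.sum_congr rfl fun a _ => ?_
          rw [Finset.mul_sum, Finset.sum_filter]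
          refine Finset.sum_congr rfl fun b _ => ?_
          simp only [r, eq_comm (a := φ a)]
          split_ifs <;> ring
      _ = ∑ a ∈ pa.support, pa a := by
          refine Finset.sum_congr rfl fun a ha => ?_
          rw [← mapDomain_apply_eq_sum_fiber ψ pb, ht_snd]
          have : 0 < t (φ a) := mapDomain_apply_pos φ hpa0 ha
          field_simp
      _ = 1 := (hu.mapDomain Prod.fst).2
  have hlog_r : ∀ z ∈ u.support, u z * Real.log (r z) = u z * Real.log (pa z.1)
      + u z * Real.log (pb z.2) - u z * Real.log (t (φ z.1)) := fun z hz => by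
    rw [Real.log_div (mul_pos (hpa z hz) (hpb z hz)).ne' (ht z hz).ne',
      Real.log_mul (hpa z hz).ne' (hpb z hz).ne']
    ring
  have hpa_log : ∑ z ∈ u.support, u z * Real.log (pa z.1) = -ent pa :=
    sum_mul_log_mapDomain Prod.fst u
  have hpb_log : ∑ z ∈ u.support, u z * Real.log (pb z.2) = -ent pb :=
    sum_mul_log_mapDomain Prod.snd u
  have ht_log : ∑ z ∈ u.support, u z * Real.log (t (φ z.1)) = -ent t := by
    rw [ht_comp]; exact sum_mul_log_mapDomain (φ ∘ Prod.fst) u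
  have hgibbs := ent_le_neg_sum_mul_log hu hr hr_mass
  rw [Finset.sum_congr rfl hlog_r, Finset.sum_sub_distrib, Finset.sum_add_distrib,
    hpa_log, hpb_log, ht_log] at hgibbs
  linarith

theorem ent_le_ent_fstMarg_add_ent_sndMarg {u : (α × β) →₀ ℝ} (hu : IsPMF u) :
    ent u ≤ ent (fstMarg u) + ent (sndMarg u) := by
  have hpa : IsPMF (fstMarg u) := hu.mapDomain Prod.fst
  have := ent_add_ent_le_of_comp_eq hu (fun _ => ()) (fun _ => ()) fun _ _ => rfl
  linarith [ent_nonneg (hpa.mapDomain fun _ => ())]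

end Submodularity

section RuzsaDistance

variable {α G : Type*} [AddCommGroup G]

lemma mapDomain_sub_prodPMF (f : α → G) (w : α →₀ ℝ) (s : G →₀ ℝ) :
    Finsupp.mapDomain (fun ω : α × G => f ω.1 - ω.2) (prodPMF w s)
      = subDist (Finsupp.mapDomain f w) s := by
  rw [subDist, ← Finsupp.mapDomain_id (v := s), ← mapDomain_prodMap_prodPMF,
    ← Finsupp.mapDomain_comp, Finsupp.mapDomain_id]
  rfl

lemma ent_subDist_comm (p q : G →₀ ℝ) : ent (subDist q p) = ent (subDist p q) := by
  have hneg : subDist q p = Finsupp.mapDomain Neg.neg (subDist p q) := by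
    rw [subDist, subDist, ← mapDomain_swap_prodPMF, ← Finsupp.mapDomain_comp,
      ← Finsupp.mapDomain_comp]
    congr 1
    funext z
    exact (neg_sub z.1 z.2).symm
  rw [hneg, ent_mapDomain_of_injective neg_injective]

/-- The entropic Ruzsa triangle inequality for a coupling `(X, Y) ~ w` and an independent
`Z ~ s`: since `X - Y = (X - Z) - (Y - Z)` and `(X, Y, Z)` is recovered from `(X, Y, X - Z)`,
submodularity gives `H(X, Y) + H(Z) + H(X - Y) ≤ H(X, Y) + H(X - Z, Y - Z)`. -/
theorem ent_sub_add_ent_le {w : (G × G) →₀ ℝ} {s : G →₀ ℝ} (hw : IsPMF w) (hs : IsPMF s) :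
    ent (Finsupp.mapDomain (fun z : G × G => z.1 - z.2) w) + ent s
      ≤ ent (subDist (fstMarg w) s) + ent (subDist (sndMarg w) s) := by
  classical
  set W := prodPMF w s
  have hW : IsPMF W := hw.prodPMF hs
  set D : (G × G) × G → G × G := fun ω => (ω.1.1 - ω.2, ω.1.2 - ω.2)
  set u := Finsupp.mapDomain (fun ω => (ω.1, D ω)) W
  have hu_fst : fstMarg u = w := by
    rw [fstMarg, ← Finsupp.mapDomain_comp]
    exact fstMarg_prodPMF w hs
  have hu_snd : sndMarg u = Finsupp.mapDomain D W := by
    rw [sndMarg, ← Finsupp.mapDomain_comp]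
    rfl
  have hu_ent : ent u = ent w + ent s := by
    refine (ent_mapDomain_of_injective (fun ω ω' h => ?_) W).trans (ent_prodPMF hw hs)
    simp only [D, Prod.mk.injEq] at h
    exact Prod.ext h.1 (by simpa [h.1] using h.2.1)
  have hsubmod := ent_add_ent_le_of_comp_eq (hW.mapDomain fun ω => (ω.1, D ω))
    (fun z : G × G => z.1 - z.2) (fun z : G × G => z.1 - z.2) fun z hz => by
      obtain ⟨ω, -, rfl⟩ := Finset.mem_image.1 (Finsupp.mapDomain_support hz)
      exact (sub_sub_sub_cancel_right _ _ _).symm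
  have hD := ent_le_ent_fstMarg_add_ent_sndMarg (hW.mapDomain D)
  have hD_fst : fstMarg (Finsupp.mapDomain D W) = subDist (fstMarg w) s := by
    rw [fstMarg, ← Finsupp.mapDomain_comp]
    exact mapDomain_sub_prodPMF Prod.fst w s
  have hD_snd : sndMarg (Finsupp.mapDomain D W) = subDist (sndMarg w) s := by
    rw [sndMarg, ← Finsupp.mapDomain_comp]
    exact mapDomain_sub_prodPMF Prod.snd w s
  rw [hu_ent, hu_fst, hu_snd] at hsubmod
  rw [hD_fst, hD_snd] at hD
  linarith

/-- The triangle inequality with `Z ~ q`, and again for two independent copies of `q` with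
`Z ~ p`. -/
theorem coupling_sub_ent_le {p q : G →₀ ℝ} (hp : IsPMF p) (hq : IsPMF q) {w : (G × G) →₀ ℝ}
    (hw : IsPMF w) (h₁ : fstMarg w = p) (h₂ : sndMarg w = q) :
    ent (Finsupp.mapDomain (fun z : G × G => z.1 - z.2) w) - ent p / 2 - ent q / 2
      ≤ 3 * dEnt p q := by
  have hXY := ent_sub_add_ent_le hw hq
  have hqq := ent_sub_add_ent_le (hq.prodPMF hq) hp
  rw [h₁, h₂] at hXY
  rw [fstMarg_prodPMF q hq, sndMarg_prodPMF hq q, ent_subDist_comm] at hqq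
  change ent (subDist q q) + ent p ≤ _ at hqq
  rw [dEnt]
  linarith

theorem dEnt_le_dEntStar {p q : G →₀ ℝ} (hp : IsPMF p) (hq : IsPMF q) :
    dEnt p q ≤ dEntStar p q := by
  refine le_csSup ⟨3 * dEnt p q, ?_⟩
    ⟨prodPMF p q, hp.prodPMF hq, fstMarg_prodPMF p hq, sndMarg_prodPMF hp q, rfl⟩
  rintro _ ⟨w, hw, h₁, h₂, rfl⟩
  exact coupling_sub_ent_le hp hq hw h₁ h₂

theorem dEntStar_le {p q : G →₀ ℝ} (hp : IsPMF p) (hq : IsPMF q) :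
    dEntStar p q ≤ 3 * dEnt p q := by
  refine csSup_le
    ⟨_, prodPMF p q, hp.prodPMF hq, fstMarg_prodPMF p hq, sndMarg_prodPMF hp q, rfl⟩ ?_
  rintro _ ⟨w, hw, h₁, h₂, rfl⟩
  exact coupling_sub_ent_le hp hq hw h₁ h₂

end RuzsaDistance

/-- For random variables `X, Y` taking values in finite subsets of an
abelian group `G`, one has `d_ent(X, Y) ≤ d*_ent(X, Y) ≤ 3 d_ent(X, Y)`. -/
theorem statement2 {G : Type*} [AddCommGroup G] (p q : G →₀ ℝ)
    (hp : IsPMF p) (hq : IsPMF q) :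
    dEnt p q ≤ dEntStar p q ∧ dEntStar p q ≤ 3 * dEnt p q :=
  ⟨dEnt_le_dEntStar hp hq, dEntStar_le hp hq⟩

end
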